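/- For every n ≥ 0, every occurrence of the symbol b in the period-doubling word D_n is at an even position (1-based); consequently, the string bb is not a substring of D_n. Moreover, any occurrence of a substring x of D_n with |x| ≥ 3 has uniquely determined starting-position parity: all occurrences of x in D_n start at positions of the same parity. -/
import Mathlib


/-- The period-doubling morphism over {a, b} (with `false` = a, `true` = b):
φ(a) = ab, φ(b) = aa. -/
def phi : Bool → List Bool
  | false => [false, true]
  | true => [false, false]

/-- Period-doubling words: D 0 = a, D (n+1) = φ(D n); |D n| = 2^n. -/
def D : ℕ → List Bool
  | 0 => [false]
  | n + 1 => (D n).flatMap phi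

/-- `w` occurs in `T` at (1-based) position `i`, i.e. `w = T[i .. i + |w| - 1]`. -/
def OccursAt {α : Type*} (T w : List α) (i : ℕ) : Prop :=
  1 ≤ i ∧ i + w.length ≤ T.length + 1 ∧ (T.drop (i - 1)).take w.length = w

lemma phi_length (c : Bool) : (phi c).length = 2 := by cases c <;> rfl

lemma flatMap_phi_length (u : List Bool) : (u.flatMap phi).length = 2 * u.length := by
  induction u with
  | nil => rfl
  | cons c u ih =>
    rw [List.flatMap_cons, List.length_append, phi_length, ih, List.length_cons]
    ring

lemma fm_even (u : List Bool) (k : ℕ) (c : Bool) (h : u[k]? = some c) :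
    (u.flatMap phi)[2 * k]? = some false := by
  induction u generalizing k with
  | nil => simp at h
  | cons d u ih =>
    rw [List.flatMap_cons]
    cases k with
    | zero => cases d <;> rfl
    | succ k =>
      have h2 : (phi d).length ≤ 2 * (k + 1) := by rw [phi_length]; omega
      rw [List.getElem?_append_right h2, phi_length]
      have : 2 * (k + 1) - 2 = 2 * k := by omega
      rw [this]
      exact ih k (by simpa using h)

lemma fm_odd (u : List Bool) (k : ℕ) (c : Bool) (h : u[k]? = some c) :
    (u.flatMap phi)[2 * k + 1]? = some (!c) := by
  induction u generalizing k with
  | nil => simp at h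
  | cons d u ih =>
    rw [List.flatMap_cons]
    cases k with
    | zero =>
      simp at h
      subst h
      cases d <;> simp [phi]
    | succ k =>
      have h2 : (phi d).length ≤ 2 * (k + 1) + 1 := by rw [phi_length]; omega
      rw [List.getElem?_append_right h2, phi_length]
      have : 2 * (k + 1) + 1 - 2 = 2 * k + 1 := by omega
      rw [this]
      exact ih k (by simpa using h)

/-- Even 0-based positions of `D n` are never `true`. -/
lemma evenFalse (n k : ℕ) : (D n)[2 * k]? ≠ some true := by
  cases n with
  | zero =>
    cases k with
    | zero => simp [D]
    | succ k =>
      show ([false] : List Bool)[2 * (k + 1)]? ≠ some true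
      rw [List.getElem?_eq_none (by simp; omega)]
      simp
  | succ m =>
    show ((D m).flatMap phi)[2 * k]? ≠ some true
    cases h : (D m)[k]? with
    | none =>
      have hk : (D m).length ≤ k := by
        by_contra hlt
        push_neg at hlt
        rw [List.getElem?_eq_getElem hlt] at h
        simp at h
      rw [List.getElem?_eq_none (by rw [flatMap_phi_length]; omega)]
      simp
    | some c =>
      rw [fm_even (D m) k c h]
      simp

/-- If an odd 0-based position of `D (m+1)` holds `false`, the preimage letter is `true`. -/
lemma oddFalse (m k : ℕ) (h : (D (m + 1))[2 * k + 1]? = some false) :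
    (D m)[k]? = some true := by
  cases hk : (D m)[k]? with
  | none =>
    exfalso
    have hk' : (D m).length ≤ k := by
      by_contra hlt
      push_neg at hlt
      rw [List.getElem?_eq_getElem hlt] at hk
      simp at hk
    have : (D (m + 1))[2 * k + 1]? = none := by
      apply List.getElem?_eq_none
      show ((D m).flatMap phi).length ≤ 2 * k + 1
      rw [flatMap_phi_length]; omega
    rw [this] at h
    simp at h
  | some c =>
    have h2 : ((D m).flatMap phi)[2 * k + 1]? = some false := h
    rw [fm_odd (D m) k c hk] at h2
    simp at h2
    exact congrArg some h2

/-- Extract letters from an occurrence. -/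
lemma occ_getElem? {T x : List Bool} {i : ℕ} (h : OccursAt T x i) (m : ℕ)
    (hm : m < x.length) : T[i - 1 + m]? = x[m]? := by
  obtain ⟨h1, h2, h3⟩ := h
  conv_rhs => rw [← h3]
  rw [List.getElem?_take, if_pos hm, List.getElem?_drop]

/-- For every n: every occurrence of b in D_n is at an even (1-based)
position; bb is not a substring of D_n; and all occurrences of any substring x of D_n
with |x| ≥ 3 start at positions of the same parity. -/
theorem pd_parity_properties :
    ∀ n : ℕ,
      (∀ i : ℕ, OccursAt (D n) [true] i → 2 ∣ i) ∧
      ¬ ([true, true] <:+: D n) ∧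
      (∀ x : List Bool, 3 ≤ x.length →
        ∀ i j : ℕ, OccursAt (D n) x i → OccursAt (D n) x j → i % 2 = j % 2) := by
  intro n
  have occT : ∀ (x : List Bool) i m, OccursAt (D n) x i → m < x.length →
      x[m]? = some true → ¬ (2 ∣ (i - 1 + m)) := by
    intro x i m hocc hm hx hdvd
    obtain ⟨k, hk⟩ := hdvd
    have := occ_getElem? hocc m hm
    rw [hk, hx] at this
    exact evenFalse n k this
  have part1 : ∀ i : ℕ, OccursAt (D n) [true] i → 2 ∣ i := by
    intro i hocc
    have h1 := hocc.1
    have := occT [true] i 0 hocc (by simp) (by simp)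
    omega
  refine ⟨part1, ?_, ?_⟩
  · rintro ⟨s, t, hst⟩
    have hocc : OccursAt (D n) [true, true] (s.length + 1) := by
      refine ⟨by omega, ?_, ?_⟩
      · rw [← hst]
        simp only [List.length_append, List.length_cons, List.length_nil]
        omega
      · rw [← hst]
        simp only [Nat.add_sub_cancel, List.append_assoc, List.drop_left]
        rfl
    have h0 := occT [true, true] (s.length + 1) 0 hocc (by simp) (by simp)
    have h1 := occT [true, true] (s.length + 1) 1 hocc (by simp) (by simp)
    omega
  · -- parity of occurrences of length ≥ 3 factors
    have key : ∀ x : List Bool, 3 ≤ x.length → ∀ i j : ℕ, OccursAt (D n) x i →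
        OccursAt (D n) x j → i % 2 = 1 → j % 2 = 0 → False := by
      intro x hx i j hi hj hio hje
      -- n ≥ 1 since D n contains a length-3 word
      cases n with
      | zero =>
        have h2 := hj.2.1
        have h1 := hj.1
        simp [D] at h2
        omega
      | succ m =>
        obtain ⟨a, ha⟩ : ∃ a, i = 2 * a + 1 := ⟨i / 2, by omega⟩
        obtain ⟨b, hb⟩ : ∃ b, j = 2 * b + 2 := ⟨j / 2 - 1, by have := hj.1; omega⟩
        have e0 := occ_getElem? hi 0 (by omega)
        have e2 := occ_getElem? hi 2 (by omega)
        rw [show i - 1 + 0 = 2 * a by omega] at e0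
        rw [show i - 1 + 2 = 2 * (a + 1) by omega] at e2
        have hx0 : x[0]? = some false := by
          cases hc : x[0]? with
          | none =>
            rw [List.getElem?_eq_getElem (show 0 < x.length by omega)] at hc
            simp at hc
          | some c =>
            cases c with
            | true => rw [hc] at e0; exact absurd e0 (evenFalse (m + 1) a)
            | false => rfl
        have hx2 : x[2]? = some false := by
          cases hc : x[2]? with
          | none =>
            rw [List.getElem?_eq_getElem (show 2 < x.length by omega)] at hc
            simp at hc
          | some c =>
            cases c with
            | true => rw [hc] at e2; exact absurd e2 (evenFalse (m + 1) (a + 1))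
            | false => rfl
        have f0 := occ_getElem? hj 0 (by omega)
        have f2 := occ_getElem? hj 2 (by omega)
        have g0 : (D (m + 1))[2 * b + 1]? = some false := by
          rw [show 2 * b + 1 = j - 1 + 0 by omega, f0, hx0]
        have g2 : (D (m + 1))[2 * (b + 1) + 1]? = some false := by
          rw [show 2 * (b + 1) + 1 = j - 1 + 2 by omega, f2, hx2]
        have t0 := oddFalse m b g0
        have t1 := oddFalse m (b + 1) g2
        rcases Nat.even_or_odd b with ⟨c, hc⟩ | ⟨c, hc⟩
        · exact evenFalse m c (by rw [← t0]; congr 1; omega)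
        · exact evenFalse m (c + 1) (by rw [← t1]; congr 1; omega)
    intro x hx i j hi hj
    rcases Nat.even_or_odd i with ⟨c, hc⟩ | ⟨c, hc⟩ <;>
      rcases Nat.even_or_odd j with ⟨d, hd⟩ | ⟨d, hd⟩
    · omega
    · exact absurd (key x hx j i hj hi (by omega) (by omega)) (by simp)
    · exact absurd (key x hx i j hi hj (by omega) (by omega)) (by simp)
    · omega
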